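/- Consider the problem inf_{x ∈ ℝ^n} { f(x) : g₁(x) ≤ 0 } with f(x) = ½ xᵀQ₀x + a₀ᵀx + b₀ and g₁(x) = ½ xᵀQ₁x + a₁ᵀx + b₁, where Q₀ and Q₁ are symmetric positive definite n×n real matrices. Assume there exists x₀ with g₁(x₀) < 0 and that a₀ ≠ Q₀Q₁⁻¹a₁. Let ℒ be any lower bound on the optimal value of this problem and set μ̄ = (ℒ − f(x₀))/g₁(x₀) ≥ 0. Let θ(μ) = inf_{x ∈ ℝ^n} { f(x) + μ g₁(x) } be the dual function. Then (i) every optimal solution of the dual problem max_{μ ≥ 0} θ(μ) lies in the interval [0, μ̄], and (ii) θ is strongly concave on [0, μ̄] with constant of strong concavity α_D = (Q₁^{−1/2}(a₀ − Q₀Q₁⁻¹a₁))ᵀ (Q₁^{−1/2} Q₀ Q₁^{−1/2} + μ̄ I_n)⁻³ Q₁^{−1/2}(a₀ − Q₀Q₁⁻¹a₁), and α_D > 0. -/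

import Mathlib

open scoped Matrix
noncomputable section

/-- The square root of a positive semidefinite matrix, as defined in the older Mathlib
(`Matrix.PosSemidef.sqrt`, since removed in favour of `CFC.sqrt`). -/
def Matrix.PosSemidef.sqrt {n : Type*} [Fintype n] [DecidableEq n] {𝕜 : Type*} [RCLike 𝕜]
    [PartialOrder 𝕜]
    {A : Matrix n n 𝕜} (hA : A.PosSemidef) : Matrix n n 𝕜 :=
  hA.1.eigenvectorUnitary.1 * Matrix.diagonal ((↑) ∘ (√·) ∘ hA.1.eigenvalues) *
    (star hA.1.eigenvectorUnitary : Matrix n n 𝕜)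

/-- The quadratic function `x ↦ ½ xᵀQx + aᵀx + b`. -/
def quadF {n : ℕ} (Q : Matrix (Fin n) (Fin n) ℝ) (a : Fin n → ℝ) (b : ℝ)
    (x : Fin n → ℝ) : ℝ :=
  1/2 * (x ⬝ᵥ Q.mulVec x) + a ⬝ᵥ x + b

/-- Strong concavity with constant `α` of a (possibly extended-real-valued) function of a real
variable on a set `C ⊆ ℝ`, at points where the function is finite:
`θ(t μ₁ + (1−t) μ₂) ≥ t θ(μ₁) + (1−t) θ(μ₂) + (α t (1−t)/2)(μ₁−μ₂)²`. -/
def StrongConcaveOnR (C : Set ℝ) (α : ℝ) (θ : ℝ → EReal) : Prop :=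
  ∀ ⦃u⦄, u ∈ C → θ u ≠ ⊤ → θ u ≠ ⊥ → ∀ ⦃v⦄, v ∈ C → θ v ≠ ⊤ → θ v ≠ ⊥ →
    ∀ t ∈ Set.Icc (0:ℝ) 1,
      ((t * (θ u).toReal + (1 - t) * (θ v).toReal
          + α * t * (1 - t) / 2 * (u - v) ^ 2 : ℝ) : EReal) ≤ θ (t * u + (1 - t) * v)

/-- Dual function `θ(μ) = inf_x { f(x) + μ g₁(x) }` of a quadratic problem with one quadratic
constraint. -/
def dualQ {n : ℕ} (Q₀ Q₁ : Matrix (Fin n) (Fin n) ℝ) (a₀ a₁ : Fin n → ℝ) (b₀ b₁ : ℝ)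
    (μ : ℝ) : EReal :=
  ⨅ x : Fin n → ℝ, ((quadF Q₀ a₀ b₀ x + μ * quadF Q₁ a₁ b₁ x : ℝ) : EReal)


/-!
For `μ ≥ 0` the Lagrangian `f + μ g₁` is a strictly convex quadratic, so `θ(μ)` is its value at
the minimizer `x(μ) = -(Q₀ + μQ₁)⁻¹(a₀ + μa₁)`, which depends continuously on `μ`.

(i) Either `x(0)` is feasible, or `g₁(x(μ))` changes sign on `[0, ∞)` and the intermediate value
theorem gives `μ` with `g₁(x(μ)) = 0`; in both cases `θ(μ) = f(x(μ)) ≥ ℒ`. A dual maximizer `μ*`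
then satisfies `ℒ ≤ θ(μ*) ≤ f(x₀) + μ* g₁(x₀)`, i.e. `μ* ≤ μ̄`.

(ii) With `d = a₀ - Q₀Q₁⁻¹a₁` one has `a₀ + μa₁ = (Q₀ + μQ₁)Q₁⁻¹a₁ + d`, and
`Q₀ + μQ₁ = Q₁^{1/2}(A + μI)Q₁^{1/2}` for `A = Q₁^{-1/2}Q₀Q₁^{-1/2}`; hence `θ` is affine minus
`½ vᵀ(A + μI)⁻¹v` with `v = Q₁^{-1/2}d ≠ 0`. In an eigenbasis of `A` this is `½ ∑ cᵢ² / (λᵢ + μ)`,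
and `1/(λ + μ)` is strongly convex on `[0, μ̄]` with modulus `2/(λ + μ̄)³`, which sums to
`2 vᵀ(A + μ̄I)⁻³v = 2 α_D`.
-/

open Matrix Set

theorem Matrix.IsHermitian.mulVec_dotProduct {ι : Type*} [Fintype ι] {M : Matrix ι ι ℝ}
    (hM : M.IsHermitian) (x y : ι → ℝ) : M *ᵥ x ⬝ᵥ y = x ⬝ᵥ M *ᵥ y := by
  rw [dotProduct_mulVec, ← mulVec_transpose, ← conjTranspose_eq_transpose_of_trivial, hM.eq]

section QuadraticFunction

variable {n : ℕ}

theorem dotProduct_inv_mulVec_add_eq {M : Matrix (Fin n) (Fin n) ℝ} (hM : M.IsHermitian)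
    (hdet : IsUnit M.det) (w d : Fin n → ℝ) :
    (M *ᵥ w + d) ⬝ᵥ M⁻¹ *ᵥ (M *ᵥ w + d) = w ⬝ᵥ M *ᵥ w + 2 * (d ⬝ᵥ w) + d ⬝ᵥ M⁻¹ *ᵥ d := by
  have hinv : M⁻¹ *ᵥ (M *ᵥ w) = w := by
    rw [mulVec_mulVec, nonsing_inv_mul _ hdet, one_mulVec]
  rw [mulVec_add, hinv, dotProduct_add, add_dotProduct, add_dotProduct,
    ← hM.inv.mulVec_dotProduct (M *ᵥ w), hinv, dotProduct_comm (M *ᵥ w) w, dotProduct_comm w d]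
  ring

theorem quadF_add_mul_quadF (Q₀ Q₁ : Matrix (Fin n) (Fin n) ℝ) (a₀ a₁ : Fin n → ℝ) (b₀ b₁ μ : ℝ)
    (x : Fin n → ℝ) :
    quadF Q₀ a₀ b₀ x + μ * quadF Q₁ a₁ b₁ x =
      quadF (Q₀ + μ • Q₁) (a₀ + μ • a₁) (b₀ + μ * b₁) x := by
  simp only [quadF, add_mulVec, smul_mulVec, dotProduct_add, add_dotProduct, dotProduct_smul,
    smul_dotProduct, smul_eq_mul]
  ring

theorem quadF_eq_quadForm_add {M : Matrix (Fin n) (Fin n) ℝ} (hM : M.IsHermitian)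
    (hdet : IsUnit M.det) (c : Fin n → ℝ) (β : ℝ) (x : Fin n → ℝ) :
    quadF M c β x =
      1 / 2 * ((x + M⁻¹ *ᵥ c) ⬝ᵥ M *ᵥ (x + M⁻¹ *ᵥ c)) + (β - 1 / 2 * (c ⬝ᵥ M⁻¹ *ᵥ c)) := by
  have hc : M *ᵥ (M⁻¹ *ᵥ c) = c := by rw [mulVec_mulVec, mul_nonsing_inv _ hdet, one_mulVec]
  rw [quadF, mulVec_add, hc, dotProduct_add, add_dotProduct, add_dotProduct,
    ← hM.mulVec_dotProduct (M⁻¹ *ᵥ c) x, hc, dotProduct_comm x c, dotProduct_comm (M⁻¹ *ᵥ c) c]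
  ring

theorem quadF_neg_inv_mulVec {M : Matrix (Fin n) (Fin n) ℝ} (hM : M.IsHermitian)
    (hdet : IsUnit M.det) (c : Fin n → ℝ) (β : ℝ) :
    quadF M c β (-(M⁻¹ *ᵥ c)) = β - 1 / 2 * (c ⬝ᵥ M⁻¹ *ᵥ c) := by
  simp [quadF_eq_quadForm_add hM hdet]

theorem quadF_neg_inv_mulVec_le {M : Matrix (Fin n) (Fin n) ℝ} (hM : M.PosDef)
    (c : Fin n → ℝ) (β : ℝ) (x : Fin n → ℝ) :
    quadF M c β (-(M⁻¹ *ᵥ c)) ≤ quadF M c β x := by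
  have hdet := hM.isUnit.map detMonoidHom
  have := hM.posSemidef.dotProduct_mulVec_nonneg (x + M⁻¹ *ᵥ c)
  rw [quadF_neg_inv_mulVec hM.isHermitian hdet, quadF_eq_quadForm_add hM.isHermitian hdet]
  simp only [star_trivial] at this
  linarith

theorem continuous_quadF (Q : Matrix (Fin n) (Fin n) ℝ) (a : Fin n → ℝ) (b : ℝ) :
    Continuous (quadF Q a b) := by
  unfold quadF
  fun_prop

end QuadraticFunction

theorem inv_convexity_gap_ge {x y m t : ℝ} (hx : 0 < x) (hy : 0 < y) (hxm : x ≤ m) (hym : y ≤ m)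
    (ht₀ : 0 ≤ t) (ht₁ : t ≤ 1) :
    t * (1 - t) * (x - y) ^ 2 / m ^ 3 ≤ t * x⁻¹ + (1 - t) * y⁻¹ - (t * x + (1 - t) * y)⁻¹ := by
  set z := t * x + (1 - t) * y
  have hz : 0 < z := by
    rcases ht₀.eq_or_lt with rfl | ht₀
    · simpa [z] using hy
    · exact add_pos_of_pos_of_nonneg (mul_pos ht₀ hx) (mul_nonneg (by linarith) hy.le)
  have hzm : z ≤ m := by nlinarith
  have hgap : t * x⁻¹ + (1 - t) * y⁻¹ - z⁻¹ = t * (1 - t) * (x - y) ^ 2 / (x * y * z) := by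
    field_simp
    ring
  rw [hgap]
  refine div_le_div_of_nonneg_left (by have := sub_nonneg.2 ht₁; positivity) (by positivity) ?_
  have hm : 0 ≤ m := hx.le.trans hxm
  calc x * y * z ≤ m * m * m := by gcongr
    _ = m ^ 3 := by ring

section LagrangianDuality

variable {E : Type*} {f g : E → ℝ} {x : ℝ → E} {x₀ : E} {ℒ μ : ℝ}

theorem le_div_of_le_lagrangian (hmin : ∀ y, f (x μ) + μ * g (x μ) ≤ f y + μ * g y)
    (hx₀ : g x₀ < 0) (hℒ : ℒ ≤ f (x μ) + μ * g (x μ)) : μ ≤ (ℒ - f x₀) / g x₀ := by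
  rw [le_div_iff_of_neg hx₀]
  linarith [hmin x₀]

theorem exists_constraint_neg_of_lagrangian_min
    (hmin : ∀ μ, 0 ≤ μ → ∀ y, f (x μ) + μ * g (x μ) ≤ f y + μ * g y) (hx₀ : g x₀ < 0) :
    ∃ μ, 0 ≤ μ ∧ g (x μ) < 0 := by
  -- at `μ₁` the weak duality bound `f x₀ + μ₁ g x₀` falls below the unconstrained minimum of `f`
  set μ₁ := (f x₀ - f (x 0) + 1) / -g x₀
  have hf : f (x 0) ≤ f x₀ := by simpa using hmin 0 le_rfl x₀
  have hμ₁ : 0 < μ₁ := div_pos (by linarith) (by linarith)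
  have hμ₁g : μ₁ * g x₀ = f (x 0) - f x₀ - 1 := by
    simp only [μ₁]
    field_simp [hx₀.ne]
    ring
  refine ⟨μ₁, hμ₁.le, neg_of_mul_neg_right ?_ hμ₁.le⟩
  have h1 := hmin μ₁ hμ₁.le x₀
  have h2 : f (x 0) ≤ f (x μ₁) := by simpa using hmin 0 le_rfl (x μ₁)
  linarith

theorem exists_lowerBound_le_lagrangian
    (hmin : ∀ μ, 0 ≤ μ → ∀ y, f (x μ) + μ * g (x μ) ≤ f y + μ * g y)
    (hcont : ContinuousOn (fun μ => g (x μ)) (Ici 0)) (hx₀ : g x₀ < 0)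
    (hℒ : ∀ y, g y ≤ 0 → ℒ ≤ f y) :
    ∃ μ, 0 ≤ μ ∧ ℒ ≤ f (x μ) + μ * g (x μ) := by
  by_cases hg : g (x 0) ≤ 0
  · exact ⟨0, le_rfl, by simpa using hℒ _ hg⟩
  obtain ⟨μ₁, hμ₁, hgμ₁⟩ := exists_constraint_neg_of_lagrangian_min hmin hx₀
  obtain ⟨μ, hμ, hgμ⟩ := intermediate_value_Icc' hμ₁ (hcont.mono Icc_subset_Ici_self)
    ⟨hgμ₁.le, (not_le.1 hg).le⟩
  exact ⟨μ, hμ.1, by simpa [hgμ] using hℒ _ hgμ.le⟩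

end LagrangianDuality

section DualFunction

variable {n : ℕ} (Q₀ Q₁ : Matrix (Fin n) (Fin n) ℝ) (a₀ a₁ : Fin n → ℝ) (b₀ b₁ : ℝ) {μ : ℝ}

def lagrangianArgmin (μ : ℝ) : Fin n → ℝ := -((Q₀ + μ • Q₁)⁻¹ *ᵥ (a₀ + μ • a₁))

variable {Q₀ Q₁}

theorem lagrangianArgmin_le (hM : (Q₀ + μ • Q₁).PosDef) (y : Fin n → ℝ) :
    quadF Q₀ a₀ b₀ (lagrangianArgmin Q₀ Q₁ a₀ a₁ μ)
        + μ * quadF Q₁ a₁ b₁ (lagrangianArgmin Q₀ Q₁ a₀ a₁ μ)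
      ≤ quadF Q₀ a₀ b₀ y + μ * quadF Q₁ a₁ b₁ y := by
  rw [quadF_add_mul_quadF, quadF_add_mul_quadF]
  exact quadF_neg_inv_mulVec_le hM _ _ y

theorem lagrangian_lagrangianArgmin (hM : (Q₀ + μ • Q₁).PosDef) :
    quadF Q₀ a₀ b₀ (lagrangianArgmin Q₀ Q₁ a₀ a₁ μ)
        + μ * quadF Q₁ a₁ b₁ (lagrangianArgmin Q₀ Q₁ a₀ a₁ μ)
      = b₀ + μ * b₁ - 1 / 2 * ((a₀ + μ • a₁) ⬝ᵥ (Q₀ + μ • Q₁)⁻¹ *ᵥ (a₀ + μ • a₁)) := by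
  rw [quadF_add_mul_quadF, lagrangianArgmin,
    quadF_neg_inv_mulVec hM.isHermitian (hM.isUnit.map detMonoidHom)]

theorem dualQ_eq_lagrangian_lagrangianArgmin (hM : (Q₀ + μ • Q₁).PosDef) :
    dualQ Q₀ Q₁ a₀ a₁ b₀ b₁ μ = ↑(quadF Q₀ a₀ b₀ (lagrangianArgmin Q₀ Q₁ a₀ a₁ μ)
      + μ * quadF Q₁ a₁ b₁ (lagrangianArgmin Q₀ Q₁ a₀ a₁ μ)) :=
  le_antisymm (iInf_le _ _)
    (le_iInf fun y => EReal.coe_le_coe (lagrangianArgmin_le a₀ a₁ b₀ b₁ hM y))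

theorem continuousOn_lagrangianArgmin {s : Set ℝ} (hM : ∀ μ ∈ s, (Q₀ + μ • Q₁).PosDef) :
    ContinuousOn (lagrangianArgmin Q₀ Q₁ a₀ a₁) s := by
  intro μ hμ
  have hinv : ContinuousAt (fun μ : ℝ => (Q₀ + μ • Q₁)⁻¹) μ := by
    refine (continuousAt_matrix_inv _ ?_).comp (by fun_prop)
    rw [Ring.inverse_eq_inv']
    exact continuousAt_inv₀ (hM μ hμ).det_pos.ne'
  have hmulVec : Continuous fun p : Matrix (Fin n) (Fin n) ℝ × (Fin n → ℝ) => p.1 *ᵥ p.2 :=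
    continuous_fst.matrix_mulVec continuous_snd
  exact (hmulVec.continuousAt.comp (hinv.prodMk (by fun_prop))).neg.continuousWithinAt

end DualFunction

theorem le_div_of_forall_dualQ_le {n : ℕ} {Q₀ Q₁ : Matrix (Fin n) (Fin n) ℝ} (hQ₀ : Q₀.PosDef)
    (hQ₁ : Q₁.PosSemidef) {a₀ a₁ : Fin n → ℝ} {b₀ b₁ : ℝ} {x₀ : Fin n → ℝ}
    (hx₀ : quadF Q₁ a₁ b₁ x₀ < 0) {ℒ : ℝ}
    (hℒ : ∀ x, quadF Q₁ a₁ b₁ x ≤ 0 → ℒ ≤ quadF Q₀ a₀ b₀ x) {μ : ℝ} (hμ : 0 ≤ μ)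
    (hopt : ∀ μ', 0 ≤ μ' → dualQ Q₀ Q₁ a₀ a₁ b₀ b₁ μ' ≤ dualQ Q₀ Q₁ a₀ a₁ b₀ b₁ μ) :
    μ ≤ (ℒ - quadF Q₀ a₀ b₀ x₀) / quadF Q₁ a₁ b₁ x₀ := by
  have hM : ∀ μ : ℝ, 0 ≤ μ → (Q₀ + μ • Q₁).PosDef := fun μ hμ => hQ₀.add_posSemidef (hQ₁.smul hμ)
  have hmin := fun μ hμ => lagrangianArgmin_le a₀ a₁ b₀ b₁ (hM μ hμ)
  have hcont : ContinuousOn (fun μ => quadF Q₁ a₁ b₁ (lagrangianArgmin Q₀ Q₁ a₀ a₁ μ)) (Ici 0) :=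
    (continuous_quadF Q₁ a₁ b₁).comp_continuousOn
      (continuousOn_lagrangianArgmin a₀ a₁ hM)
  obtain ⟨μ', hμ', hℒμ'⟩ := exists_lowerBound_le_lagrangian hmin hcont hx₀ hℒ
  have hle := hopt μ' hμ'
  rw [dualQ_eq_lagrangian_lagrangianArgmin a₀ a₁ b₀ b₁ (hM μ' hμ'),
    dualQ_eq_lagrangian_lagrangianArgmin a₀ a₁ b₀ b₁ (hM μ hμ), EReal.coe_le_coe_iff] at hle
  exact le_div_of_le_lagrangian (hmin μ hμ) hx₀ (hℒμ'.trans hle)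

section SquareRoot

variable {ι : Type*} [Fintype ι] [DecidableEq ι] {A : Matrix ι ι ℝ} (hA : A.PosSemidef)

theorem Matrix.PosSemidef.sqrt_eq_cfc : hA.sqrt = cfc Real.sqrt A :=
  (hA.isHermitian.cfc_eq _).symm

theorem Matrix.PosSemidef.isHermitian_sqrt : hA.sqrt.IsHermitian := by
  rw [hA.sqrt_eq_cfc]
  exact cfc_predicate _ _

theorem Matrix.PosSemidef.sqrt_mul_self : hA.sqrt * hA.sqrt = A := by
  have hsa : IsSelfAdjoint A := hA.isHermitian
  rw [hA.sqrt_eq_cfc, ← cfc_mul Real.sqrt Real.sqrt A (by fun_prop) (by fun_prop)]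
  refine (cfc_congr fun x hx => ?_).trans (cfc_id' ℝ A)
  rw [hA.isHermitian.spectrum_real_eq_range_eigenvalues] at hx
  obtain ⟨i, rfl⟩ := hx
  exact Real.mul_self_sqrt (hA.eigenvalues_nonneg i)

end SquareRoot

section Spectral

variable {ι : Type*} [Fintype ι] [DecidableEq ι] {A : Matrix ι ι ℝ}

theorem Matrix.IsHermitian.dotProduct_cfc_mulVec (hA : A.IsHermitian) (f : ℝ → ℝ) (v : ι → ℝ) :
    v ⬝ᵥ hA.cfc f *ᵥ v = ∑ i, f (hA.eigenvalues i) *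
      (star (hA.eigenvectorUnitary : Matrix ι ι ℝ) *ᵥ v) i ^ 2 := by
  have hUT : (hA.eigenvectorUnitary : Matrix ι ι ℝ)ᵀ =
      star (hA.eigenvectorUnitary : Matrix ι ι ℝ) := by
    rw [star_eq_conjTranspose, conjTranspose_eq_transpose_of_trivial]
  rw [IsHermitian.cfc, Unitary.conjStarAlgAut_apply, ← mulVec_mulVec, ← mulVec_mulVec,
    dotProduct_mulVec, ← mulVec_transpose, hUT]
  simp only [dotProduct, mulVec_diagonal, Function.comp_apply, RCLike.ofReal_real_eq_id, id]
  exact Finset.sum_congr rfl fun i _ => by ring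

theorem Matrix.PosDef.inv_pow_add_smul_one (hA : A.PosDef) {μ : ℝ} (hμ : 0 ≤ μ) (k : ℕ) :
    ((A + μ • 1) ^ k)⁻¹ = hA.isHermitian.cfc (fun x => ((x + μ) ^ k)⁻¹) := by
  have hsa : IsSelfAdjoint A := hA.isHermitian
  have hspec : ∀ x ∈ spectrum ℝ A, (x + μ) ^ k ≠ 0 := by
    intro x hx
    rw [hA.isHermitian.spectrum_real_eq_range_eigenvalues] at hx
    obtain ⟨i, rfl⟩ := hx
    exact pow_ne_zero k (by linarith [hA.eigenvalues_pos i])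
  have hpow : cfc (fun x => (x + μ) ^ k) A = (A + μ • 1) ^ k := by
    rw [cfc_pow (fun x => x + μ) k A (by fun_prop), cfc_add_const μ (fun x => x) A (by fun_prop),
      cfc_id' ℝ A, Algebra.algebraMap_eq_smul_one]
  rw [← hA.isHermitian.cfc_eq, cfc_inv (fun x => (x + μ) ^ k) A hspec (by fun_prop), hpow,
    nonsing_inv_eq_ringInverse]

theorem Matrix.PosDef.dotProduct_inv_pow_add_smul_one_mulVec (hA : A.PosDef) {μ : ℝ} (hμ : 0 ≤ μ)
    (k : ℕ) (v : ι → ℝ) :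
    v ⬝ᵥ ((A + μ • 1) ^ k)⁻¹ *ᵥ v = ∑ i, ((hA.isHermitian.eigenvalues i + μ) ^ k)⁻¹ *
      (star (hA.isHermitian.eigenvectorUnitary : Matrix ι ι ℝ) *ᵥ v) i ^ 2 := by
  rw [hA.inv_pow_add_smul_one hμ, IsHermitian.dotProduct_cfc_mulVec]

theorem Matrix.PosDef.dotProduct_inv_pow_add_smul_one_mulVec_pos (hA : A.PosDef) {μ : ℝ}
    (hμ : 0 ≤ μ) (k : ℕ) {v : ι → ℝ} (hv : v ≠ 0) :
    0 < v ⬝ᵥ ((A + μ • 1) ^ k)⁻¹ *ᵥ v := by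
  have hUv : star (hA.isHermitian.eigenvectorUnitary : Matrix ι ι ℝ) *ᵥ v ≠ 0 := fun h => hv <| by
    rw [← one_mulVec v, ← (hA.isHermitian.eigenvectorUnitary).2.2, ← mulVec_mulVec, h,
      mulVec_zero]
  obtain ⟨i, hi⟩ := Function.ne_iff.1 hUv
  have hpos : ∀ j, 0 < ((hA.isHermitian.eigenvalues j + μ) ^ k)⁻¹ := fun j =>
    inv_pos.2 (pow_pos (by linarith [hA.eigenvalues_pos j]) k)
  rw [hA.dotProduct_inv_pow_add_smul_one_mulVec hμ]
  exact Finset.sum_pos' (fun j _ => mul_nonneg (hpos j).le (sq_nonneg _))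
    ⟨i, Finset.mem_univ _, mul_pos (hpos i) (sq_pos_of_ne_zero hi)⟩

theorem Matrix.PosDef.strongConvexOn_dotProduct_inv_add_smul_one_mulVec (hA : A.PosDef)
    (v : ι → ℝ) (m : ℝ) :
    StrongConvexOn (Icc 0 m) (2 * (v ⬝ᵥ ((A + m • 1) ^ 3)⁻¹ *ᵥ v))
      (fun μ => v ⬝ᵥ (A + μ • 1)⁻¹ *ᵥ v) := by
  refine ⟨convex_Icc 0 m, fun u hu w hw s t hs ht hst => ?_⟩
  obtain rfl : t = 1 - s := by linarith
  have hsw : 0 ≤ s * u + (1 - s) * w := by nlinarith [hu.1, hw.1]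
  have hinv : ∀ μ, 0 ≤ μ → v ⬝ᵥ (A + μ • 1)⁻¹ *ᵥ v = ∑ i, (hA.isHermitian.eigenvalues i + μ)⁻¹ *
      (star (hA.isHermitian.eigenvectorUnitary : Matrix ι ι ℝ) *ᵥ v) i ^ 2 := fun μ hμ => by
    simpa using hA.dotProduct_inv_pow_add_smul_one_mulVec hμ 1 v
  simp only [smul_eq_mul, Real.norm_eq_abs, sq_abs]
  rw [hinv _ hsw, hinv _ hu.1, hinv _ hw.1,
    hA.dotProduct_inv_pow_add_smul_one_mulVec (hu.1.trans hu.2)]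
  set eig := hA.isHermitian.eigenvalues
  set c := star (hA.isHermitian.eigenvectorUnitary : Matrix ι ι ℝ) *ᵥ v
  have hterm : ∀ i ∈ Finset.univ, (eig i + (s * u + (1 - s) * w))⁻¹ * c i ^ 2 ≤
      s * ((eig i + u)⁻¹ * c i ^ 2) + (1 - s) * ((eig i + w)⁻¹ * c i ^ 2)
        - s * (1 - s) * (((eig i + m) ^ 3)⁻¹ * c i ^ 2) * (u - w) ^ 2 := by
    intro i _
    have heig := hA.eigenvalues_pos i
    have hgap := inv_convexity_gap_ge (x := eig i + u) (y := eig i + w) (m := eig i + m) (t := s)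
      (by linarith [hu.1]) (by linarith [hw.1]) (by linarith [hu.2]) (by linarith [hw.2]) hs
      (by linarith)
    have hc := mul_le_mul_of_nonneg_right hgap (sq_nonneg (c i))
    linear_combination hc
  calc _ ≤ _ := Finset.sum_le_sum hterm
    _ = _ := by
      simp only [Finset.sum_sub_distrib, Finset.sum_add_distrib, ← Finset.mul_sum, ← Finset.sum_mul]
      ring

end Spectral

theorem StrongConvexOn.strongConcaveOn_affine_sub_half {s : Set ℝ} {α : ℝ} {ψ : ℝ → ℝ}
    (hψ : StrongConvexOn s (2 * α) ψ) (p q : ℝ) :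
    StrongConcaveOn s α (fun μ => p + q * μ - ψ μ / 2) := by
  refine ⟨hψ.1, fun u hu w hw a b ha hb hab => ?_⟩
  have h := hψ.2 hu hw ha hb hab
  simp only [smul_eq_mul] at h ⊢
  linear_combination h / 2 + p * hab

theorem StrongConcaveOn.strongConcaveOnR {C : Set ℝ} {α : ℝ} {h : ℝ → ℝ} {θ : ℝ → EReal}
    (hh : StrongConcaveOn C α h) (hθ : ∀ μ ∈ C, θ μ = h μ) : StrongConcaveOnR C α θ := by
  intro u hu _ _ v hv _ _ t ht
  have hmem : t * u + (1 - t) * v ∈ C := by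
    simpa only [smul_eq_mul] using hh.1 hu hv ht.1 (sub_nonneg.2 ht.2) (add_sub_cancel t 1)
  have h := hh.2 hu hv ht.1 (sub_nonneg.2 ht.2) (add_sub_cancel t 1)
  simp only [smul_eq_mul, Real.norm_eq_abs, sq_abs] at h
  rw [hθ u hu, hθ v hv, hθ _ hmem, EReal.toReal_coe, EReal.toReal_coe]
  exact EReal.coe_le_coe (by linear_combination h)

theorem Matrix.IsHermitian.dotProduct_inv_conj_mulVec {n : ℕ} {R : Matrix (Fin n) (Fin n) ℝ}
    (hR : R.IsHermitian) (X : Matrix (Fin n) (Fin n) ℝ) (d : Fin n → ℝ) :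
    d ⬝ᵥ (R * X * R)⁻¹ *ᵥ d = (R⁻¹ *ᵥ d) ⬝ᵥ X⁻¹ *ᵥ (R⁻¹ *ᵥ d) := by
  rw [Matrix.mul_inv_rev, Matrix.mul_inv_rev, ← mulVec_mulVec, ← mulVec_mulVec,
    ← hR.inv.mulVec_dotProduct]

theorem dualQ_eq_affine_sub_half {n : ℕ} {Q₀ Q₁ R : Matrix (Fin n) (Fin n) ℝ} (hQ₀ : Q₀.PosDef)
    (hR : R.IsHermitian) (hRdet : IsUnit R.det) (hRR : R * R = Q₁) (a₀ a₁ : Fin n → ℝ)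
    (b₀ b₁ : ℝ) :
    ∃ p q : ℝ, ∀ μ, 0 ≤ μ → dualQ Q₀ Q₁ a₀ a₁ b₀ b₁ μ =
      ↑(p + q * μ - (R⁻¹ *ᵥ (a₀ - (Q₀ * Q₁⁻¹) *ᵥ a₁)) ⬝ᵥ
        (R⁻¹ * Q₀ * R⁻¹ + μ • 1)⁻¹ *ᵥ (R⁻¹ *ᵥ (a₀ - (Q₀ * Q₁⁻¹) *ᵥ a₁)) / 2) := by
  set d := a₀ - (Q₀ * Q₁⁻¹) *ᵥ a₁
  set w := Q₁⁻¹ *ᵥ a₁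
  refine ⟨b₀ - w ⬝ᵥ Q₀ *ᵥ w / 2 - d ⬝ᵥ w, b₁ - w ⬝ᵥ Q₁ *ᵥ w / 2, fun μ hμ => ?_⟩
  have hQ₁ : Q₁.PosSemidef := by
    simpa only [hR.eq, hRR] using posSemidef_conjTranspose_mul_self R
  have hQ₁det : IsUnit Q₁.det := hRR ▸ (det_mul R R).symm ▸ hRdet.mul hRdet
  have hM : (Q₀ + μ • Q₁).PosDef := hQ₀.add_posSemidef (hQ₁.smul hμ)
  have ha : a₀ + μ • a₁ = (Q₀ + μ • Q₁) *ᵥ w + d := by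
    rw [add_mulVec, smul_mulVec, mulVec_mulVec, mulVec_mulVec, mul_nonsing_inv _ hQ₁det,
      one_mulVec]
    simp only [d]
    abel
  have hconj : Q₀ + μ • Q₁ = R * (R⁻¹ * Q₀ * R⁻¹ + μ • 1) * R := by
    simp only [Matrix.mul_add, Matrix.add_mul, Matrix.mul_smul, Matrix.smul_mul, mul_one, hRR,
      ← mul_assoc, mul_nonsing_inv _ hRdet, one_mul, nonsing_inv_mul_cancel_right _ _ hRdet]
  have hw : w ⬝ᵥ (Q₀ + μ • Q₁) *ᵥ w = w ⬝ᵥ Q₀ *ᵥ w + μ * (w ⬝ᵥ Q₁ *ᵥ w) := by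
    rw [add_mulVec, smul_mulVec, dotProduct_add, dotProduct_smul, smul_eq_mul]
  rw [dualQ_eq_lagrangian_lagrangianArgmin a₀ a₁ b₀ b₁ hM,
    lagrangian_lagrangianArgmin a₀ a₁ b₀ b₁ hM,
    ha, dotProduct_inv_mulVec_add_eq hM.isHermitian (hM.isUnit.map detMonoidHom), hw, hconj,
    hR.dotProduct_inv_conj_mulVec]
  congr 1
  ring

/-- For the problem `inf { f(x) : g₁(x) ≤ 0 }` with `f, g₁` quadratics having positive definite
matrices `Q₀, Q₁`, a strictly feasible point `x₀`, `a₀ ≠ Q₀Q₁⁻¹a₁`, and a lower bound `ℒ` on the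
optimal value, setting `μ̄ = (ℒ − f(x₀))/g₁(x₀) ≥ 0`: every optimal dual solution lies in
`[0, μ̄]` and the dual function is strongly concave on `[0, μ̄]` with constant
`α_D = (Q₁^{−1/2}(a₀ − Q₀Q₁⁻¹a₁))ᵀ(Q₁^{−1/2}Q₀Q₁^{−1/2} + μ̄ I)⁻³ Q₁^{−1/2}(a₀ − Q₀Q₁⁻¹a₁) > 0`. -/
theorem dual_strongly_concave_qcqp_one_constraint
    {n : ℕ} (Q₀ Q₁ : Matrix (Fin n) (Fin n) ℝ)
    (hQ₀ : Q₀.PosDef) (hQ₁ : Q₁.PosDef)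
    (a₀ a₁ : Fin n → ℝ) (b₀ b₁ : ℝ)
    (x₀ : Fin n → ℝ) (hx₀ : quadF Q₁ a₁ b₁ x₀ < 0)
    (ha : a₀ ≠ (Q₀ * Q₁⁻¹).mulVec a₁)
    (ℒ : ℝ) (hℒ : ∀ x : Fin n → ℝ, quadF Q₁ a₁ b₁ x ≤ 0 → ℒ ≤ quadF Q₀ a₀ b₀ x) :
    0 ≤ (ℒ - quadF Q₀ a₀ b₀ x₀) / quadF Q₁ a₁ b₁ x₀ ∧
    (∀ μ : ℝ, 0 ≤ μ →
      (∀ μ' : ℝ, 0 ≤ μ' → dualQ Q₀ Q₁ a₀ a₁ b₀ b₁ μ' ≤ dualQ Q₀ Q₁ a₀ a₁ b₀ b₁ μ) →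
      μ ∈ Set.Icc 0 ((ℒ - quadF Q₀ a₀ b₀ x₀) / quadF Q₁ a₁ b₁ x₀)) ∧
    0 < ((hQ₁.posSemidef.sqrt)⁻¹.mulVec (a₀ - (Q₀ * Q₁⁻¹).mulVec a₁)) ⬝ᵥ
        ((((hQ₁.posSemidef.sqrt)⁻¹ * Q₀ * (hQ₁.posSemidef.sqrt)⁻¹
            + ((ℒ - quadF Q₀ a₀ b₀ x₀) / quadF Q₁ a₁ b₁ x₀) • (1 : Matrix (Fin n) (Fin n) ℝ)) ^ 3)⁻¹.mulVec
          ((hQ₁.posSemidef.sqrt)⁻¹.mulVec (a₀ - (Q₀ * Q₁⁻¹).mulVec a₁))) ∧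
    StrongConcaveOnR (Set.Icc 0 ((ℒ - quadF Q₀ a₀ b₀ x₀) / quadF Q₁ a₁ b₁ x₀))
      (((hQ₁.posSemidef.sqrt)⁻¹.mulVec (a₀ - (Q₀ * Q₁⁻¹).mulVec a₁)) ⬝ᵥ
        ((((hQ₁.posSemidef.sqrt)⁻¹ * Q₀ * (hQ₁.posSemidef.sqrt)⁻¹
            + ((ℒ - quadF Q₀ a₀ b₀ x₀) / quadF Q₁ a₁ b₁ x₀) • (1 : Matrix (Fin n) (Fin n) ℝ)) ^ 3)⁻¹.mulVec
          ((hQ₁.posSemidef.sqrt)⁻¹.mulVec (a₀ - (Q₀ * Q₁⁻¹).mulVec a₁))))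
      (dualQ Q₀ Q₁ a₀ a₁ b₀ b₁) := by
  set R := hQ₁.posSemidef.sqrt
  have hR : R.IsHermitian := hQ₁.posSemidef.isHermitian_sqrt
  have hRR : R * R = Q₁ := hQ₁.posSemidef.sqrt_mul_self
  have hRdet : IsUnit R.det :=
    isUnit_iff_ne_zero.2 fun h => hQ₁.det_pos.ne' (by rw [← hRR, det_mul, h, zero_mul])
  have hRinv : IsUnit R⁻¹ := isUnit_nonsing_inv_iff.2 ((isUnit_iff_isUnit_det R).2 hRdet)
  have hA : (R⁻¹ * Q₀ * R⁻¹).PosDef := by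
    simpa only [hR.inv.star_eq] using hRinv.posDef_star_right_conjugate_iff.2 hQ₀
  have hv : R⁻¹ *ᵥ (a₀ - (Q₀ * Q₁⁻¹) *ᵥ a₁) ≠ 0 := fun h =>
    sub_ne_zero.2 ha (mulVec_injective_iff_isUnit.2 hRinv (h.trans (mulVec_zero _).symm))
  have hμbar : 0 ≤ (ℒ - quadF Q₀ a₀ b₀ x₀) / quadF Q₁ a₁ b₁ x₀ :=
    div_nonneg_of_nonpos (sub_nonpos.2 (hℒ x₀ hx₀.le)) hx₀.le
  obtain ⟨p, q, hθ⟩ := dualQ_eq_affine_sub_half hQ₀ hR hRdet hRR a₀ a₁ b₀ b₁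
  exact ⟨hμbar, fun μ hμ hopt => ⟨hμ, le_div_of_forall_dualQ_le hQ₀ hQ₁.posSemidef hx₀ hℒ hμ hopt⟩,
    hA.dotProduct_inv_pow_add_smul_one_mulVec_pos hμbar 3 hv,
    ((hA.strongConvexOn_dotProduct_inv_add_smul_one_mulVec _ _).strongConcaveOn_affine_sub_half
      p q).strongConcaveOnR fun μ hμ => hθ μ hμ.1⟩
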